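/- Let n ≥ 3, ω = exp(-4πi/n), and v : Fin n → ℂ a polygon satisfying the closed cap condition. Then the cap curve, defined by v̂_1 = v_1 and v̂_{k+1} = v̂_k + ω^(k-1)(v_{k+1} - v_k), is closed: v̂_{n+1} = v̂_1. Moreover, the k-th edge of the cap curve equals ω^(k-1) times the k-th edge of the polygon: v̂_{k+1} - v̂_k = ω^(k-1)(v_{k+1} - v_k); in particular each cap edge has the same length as the corresponding polygon edge: |v̂_{k+1} - v̂_k| = |v_{k+1} - v_k|. -/

import Mathlib

/-!
Each cap edge is the polygon edge rotated by a power of the unit complex number `ω`, so edge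
lengths agree. For closedness, `v̂ₙ - v̂₀` is the twisted edge sum `∑ ωᵏ (vₖ₊₁ - vₖ)`. Since
`ωⁿ = 1` and `vₙ = v₀`, the sequence `ωᵏ vₖ` is `n`-periodic, and summation by parts gives
`ω · ∑ ωᵏ (vₖ₊₁ - vₖ) = (1 - ω) · ∑ ωᵏ vₖ`; the closed cap condition says the right-hand side
vanishes.
-/

open Complex Finset

section TwistedEdgeSum

variable {R : Type*} [CommRing R] {ω : R} {n : ℕ} {v : ℕ → R}

theorem mul_sum_pow_mul_sub (hω : ω ^ n = 1) (hv : v n = v 0) :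
    ω * ∑ k ∈ range n, ω ^ k * (v (k + 1) - v k) = (1 - ω) * ∑ k ∈ range n, ω ^ k * v k := by
  set f : ℕ → R := fun k => ω ^ k * v k
  have hterm : ∀ k, ω * (ω ^ k * (v (k + 1) - v k)) = (f (k + 1) - f k) + (1 - ω) * f k :=
    fun k => by simp only [f]; ring
  have hperiodic : f n = f 0 := by simp only [f, hω, hv, pow_zero]
  rw [mul_sum, sum_congr rfl fun k _ => hterm k, sum_add_distrib, sum_range_sub, hperiodic,
    sub_self, zero_add, ← mul_sum]

theorem sum_pow_mul_sub_eq_zero (hω : ω ^ n = 1) (hv : v n = v 0)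
    (hcap : ∑ k ∈ range n, ω ^ (k + 1) * v k = 0) :
    ∑ k ∈ range n, ω ^ k * (v (k + 1) - v k) = 0 := by
  rcases eq_or_ne n 0 with rfl | hn
  · exact sum_range_zero _
  have hunit : IsUnit ω := IsUnit.of_pow_eq_one hω hn
  have hsum : ∑ k ∈ range n, ω ^ k * v k = 0 := by
    rw [← hunit.mul_right_eq_zero, mul_sum, ← hcap]
    exact sum_congr rfl fun k _ => by ring
  rw [← hunit.mul_right_eq_zero, mul_sum_pow_mul_sub hω hv, hsum, mul_zero]

end TwistedEdgeSum

theorem exp_neg_four_pi_I_div_pow (n : ℕ) : exp (-4 * Real.pi * I / n) ^ n = 1 := by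
  rcases eq_or_ne n 0 with rfl | hn
  · exact pow_zero _
  have hexponent : (n : ℂ) * (-4 * Real.pi * I / n) = (-2 : ℤ) * (2 * Real.pi * I) := by
    field_simp
    push_cast
    ring
  rw [← exp_nat_mul, hexponent, exp_int_mul_two_pi_mul_I]

theorem norm_exp_neg_four_pi_I_div (n : ℕ) : ‖exp (-4 * Real.pi * I / n)‖ = 1 := by
  rw [norm_exp]
  simp

theorem cap_curve_closed_and_edges_general (n : ℕ) (v : ℕ → ℂ) (hv : v n = v 0)
    (ω : ℂ) (hω : ω = Complex.exp (-4 * Real.pi * Complex.I / n))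
    (hccc : ∑ k ∈ Finset.range n, ω ^ (k + 1) * v k = 0)
    (vhat : ℕ → ℂ)
    (hvhat : ∀ k < n, vhat (k + 1) = vhat k + ω ^ k * (v (k + 1) - v k)) :
    vhat n = vhat 0 ∧
    (∀ k < n, vhat (k + 1) - vhat k = ω ^ k * (v (k + 1) - v k)) ∧
    (∀ k < n, ‖vhat (k + 1) - vhat k‖ = ‖v (k + 1) - v k‖) := by
  have hedge : ∀ k < n, vhat (k + 1) - vhat k = ω ^ k * (v (k + 1) - v k) :=
    fun k hk => sub_eq_iff_eq_add'.mpr (hvhat k hk)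
  have hclosed : vhat n - vhat 0 = 0 :=
    calc vhat n - vhat 0 = ∑ k ∈ range n, (vhat (k + 1) - vhat k) := (sum_range_sub vhat n).symm
      _ = ∑ k ∈ range n, ω ^ k * (v (k + 1) - v k) :=
        sum_congr rfl fun k hk => hedge k (mem_range.mp hk)
      _ = 0 := sum_pow_mul_sub_eq_zero (hω ▸ exp_neg_four_pi_I_div_pow n) hv hccc
  refine ⟨sub_eq_zero.mp hclosed, hedge, fun k hk => ?_⟩
  rw [hedge k hk, norm_mul, norm_pow, hω, norm_exp_neg_four_pi_I_div, one_pow, one_mul]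

/-- if the closed cap condition holds, the cap curve is closed,
its edges are `ω^{k-1}` times the polygon edges, and edge lengths are preserved.
Vertices 0-indexed with `v n = v 0`. -/
theorem cap_curve_closed_and_edges (n : ℕ) (hn : 3 ≤ n) (v : ℕ → ℂ) (hv : v n = v 0)
    (ω : ℂ) (hω : ω = Complex.exp (-4 * Real.pi * Complex.I / n))
    (hccc : ∑ k ∈ Finset.range n, ω ^ (k + 1) * v k = 0)
    (vhat : ℕ → ℂ)
    (hvhat0 : vhat 0 = v 0)
    (hvhat : ∀ k < n, vhat (k + 1) = vhat k + ω ^ k * (v (k + 1) - v k)) :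
    vhat n = vhat 0 ∧
    (∀ k < n, vhat (k + 1) - vhat k = ω ^ k * (v (k + 1) - v k)) ∧
    (∀ k < n, ‖vhat (k + 1) - vhat k‖ = ‖v (k + 1) - v k‖) :=
  cap_curve_closed_and_edges_general n v hv ω hω hccc vhat hvhat
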